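/- arXiv:1209.5318 — 6 statements merged into one kernel-verified Lean document; each statement's English description precedes it below -/
import Mathlib

section
/- Let G be a locally finite graph, S a finite set of vertices such that every component C of G - S satisfies: every vertex of C with a neighbour in S has degree at least k in the subgraph of G induced by S ∪ V⁺(C). If moreover every vertex of S has degree at least k in G, then the finite subgraph of G induced by S together with all neighbours of S has minimum degree at least k. -/
open SimpleGraph Set

universe u
variable {V : Type u}

/-- A graph is locally finite if every vertex has finite neighbourhood. -/
def LocFin (G : SimpleGraph V) : Prop := ∀ v, (G.neighborSet v).Finite

/-- The vertex boundary `V⁺(U)`: vertices of `U` with a neighbour outside `U`. -/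
def vBdry (G : SimpleGraph V) (U : Set V) : Set V :=
  {v | v ∈ U ∧ ∃ w, w ∉ U ∧ G.Adj v w}

/-- The neighbourhood `N(U)` of a vertex set `U`: vertices outside `U` adjacent to `U`. -/
def nbhd (G : SimpleGraph V) (U : Set V) : Set V :=
  {w | w ∉ U ∧ ∃ v ∈ U, G.Adj v w}

/-- Degree of `v` in the subgraph of `G` induced on the vertex set `A`. -/
noncomputable def degIn (G : SimpleGraph V) (A : Set V) (v : V) : ℕ :=
  (A ∩ G.neighborSet v).ncard

/-- `C` is (the vertex set of) a component of `G - S`. -/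
def IsCompOf (G : SimpleGraph V) (S C : Set V) : Prop :=
  C.Nonempty ∧ C ∩ S = ∅ ∧ (G.induce C).Connected ∧
    ∀ v ∈ C, ∀ w, w ∉ S → G.Adj v w → w ∈ C

/-- A region of `G`: a (nonempty) connected induced subgraph with finite vertex boundary. -/
def IsRegion (G : SimpleGraph V) (C : Set V) : Prop :=
  (G.induce C).Connected ∧ (vBdry G C).Finite

/-- `δ⁺_G(C) ≥ k`: every boundary vertex of `C` has degree at least `k`
in the graph `G[S, C]` induced on `N(C) ∪ V⁺(C)`. -/
def minOutDegGE (G : SimpleGraph V) (C : Set V) (k : ℕ) : Prop :=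
  ∀ v ∈ vBdry G C, k ≤ degIn G (nbhd G C ∪ vBdry G C) v

/-- `f : ℕ → V` is a ray (one-way infinite path) in `G`. -/
def IsRay (G : SimpleGraph V) (f : ℕ → V) : Prop :=
  Function.Injective f ∧ ∀ n, G.Adj (f n) (f (n + 1))

/-- The ray `f` has a tail inside the vertex set `C`. -/
def HasTailIn (f : ℕ → V) (C : Set V) : Prop := ∃ N, ∀ n, N ≤ n → f n ∈ C

/-- Two rays are equivalent (belong to the same end) iff no finite vertex set
separates them: for every finite `S` they have tails in a common component of `G - S`. -/
def RayEquiv (G : SimpleGraph V) (f g : ℕ → V) : Prop :=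
  ∀ S : Set V, S.Finite → ∃ C, IsCompOf G S C ∧ HasTailIn f C ∧ HasTailIn g C


private lemma reach_induce (G : SimpleGraph V) (C : Set V) : ∀ {a b : V} (p : G.Walk a b)
    (hs : ∀ x ∈ p.support, x ∈ C),
    (G.induce C).Reachable ⟨a, hs a p.start_mem_support⟩ ⟨b, hs b p.end_mem_support⟩ := by
  intro a b p
  induction p with
  | nil => intro hs; exact Reachable.refl _
  | @cons a c b h p ih =>
      intro hs
      have hc : c ∈ C := hs c (by simp)
      have ha : a ∈ C := hs a (by simp)
      have hadj : (G.induce C).Adj ⟨a, ha⟩ ⟨c, hc⟩ := by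
        simpa using h
      exact hadj.reachable.trans (ih fun x hx => hs x (by simp [hx]))

/-- If every component `C` of `G - S` is such that every vertex of `C` with a neighbour
in `S` has degree at least `k` in `G[S ∪ V⁺(C)]`, and every vertex of `S` has degree at
least `k` in `G`, then the finite subgraph induced on `S ∪ N(S)` has minimum degree ≥ k. -/
theorem stmt2 (G : SimpleGraph V) (hG : LocFin G) (k : ℕ)
    (S : Set V) (hSf : S.Finite) (hSne : S.Nonempty)
    (hcomp : ∀ C, IsCompOf G S C → ∀ v ∈ C, (∃ s ∈ S, G.Adj v s) →
      k ≤ degIn G (S ∪ vBdry G C) v)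
    (hdeg : ∀ v ∈ S, k ≤ (G.neighborSet v).ncard) :
    (S ∪ nbhd G S).Finite ∧ (S ∪ nbhd G S).Nonempty ∧
      ∀ v ∈ S ∪ nbhd G S, k ≤ degIn G (S ∪ nbhd G S) v := by
  classical
  have hNfin : (nbhd G S).Finite := by
    apply Set.Finite.subset (hSf.biUnion (fun s _ => hG s))
    rintro w ⟨hwS, s, hs, hadj⟩
    exact Set.mem_biUnion hs hadj
  have hUfin : (S ∪ nbhd G S).Finite := hSf.union hNfin
  refine ⟨hUfin, hSne.mono Set.subset_union_left, ?_⟩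
  intro v hv
  rcases hv with hvS | hvN
  · have hsub : G.neighborSet v ⊆ S ∪ nbhd G S := by
      intro w hw
      by_cases hwS : w ∈ S
      · exact Or.inl hwS
      · exact Or.inr ⟨hwS, v, hvS, hw⟩
    rw [degIn, Set.inter_eq_self_of_subset_right hsub]
    exact hdeg v hvS
  · obtain ⟨hvS, s, hsS, hadj⟩ := hvN
    set C : Set V := {w | ∃ p : G.Walk v w, ∀ x ∈ p.support, x ∉ S} with hCdef
    have hvC : v ∈ C := ⟨Walk.nil, by simp [hvS]⟩
    have hclosed : ∀ w ∈ C, ∀ x, x ∉ S → G.Adj w x → x ∈ C := by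
      rintro w ⟨p, hp⟩ x hxS hwx
      refine ⟨p.concat hwx, ?_⟩
      intro y hy
      rw [Walk.support_concat] at hy
      simp only [List.concat_eq_append, List.mem_append, List.mem_singleton] at hy
      rcases hy with hy | rfl
      · exact hp y hy
      · exact hxS
    have hdisj : C ∩ S = ∅ := by
      ext a
      simp only [Set.mem_inter_iff, Set.mem_empty_iff_false, iff_false, not_and]
      rintro ⟨p, hp⟩
      exact hp a p.end_mem_support
    have hsupp : ∀ w ∈ C, ∃ p : G.Walk v w, ∀ x ∈ p.support, x ∈ C := by
      rintro w ⟨p, hp⟩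
      refine ⟨p, fun x hx => ⟨p.takeUntil x hx, fun y hy => hp y ((p.support_takeUntil_subset hx) hy)⟩⟩
    have hconn : (G.induce C).Connected := by
      rw [connected_iff]
      refine ⟨?_, ⟨⟨v, hvC⟩⟩⟩
      rintro ⟨u, hu⟩ ⟨w, hw⟩
      obtain ⟨p, hp⟩ := hsupp u hu
      obtain ⟨q, hq⟩ := hsupp w hw
      exact (reach_induce G C p hp).symm.trans (reach_induce G C q hq)
    have hIsComp : IsCompOf G S C := ⟨⟨v, hvC⟩, hdisj, hconn, hclosed⟩
    have hk := hcomp C hIsComp v hvC ⟨s, hsS, hadj.symm⟩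
    have hssub : (S ∪ vBdry G C) ∩ G.neighborSet v ⊆ (S ∪ nbhd G S) ∩ G.neighborSet v := by
      rintro w ⟨hw1 | hw2, hwN⟩
      · exact ⟨Or.inl hw1, hwN⟩
      · obtain ⟨hwC, x, hxC, hwx⟩ := hw2
        have hxS : x ∈ S := by
          by_contra hxS
          exact hxC (hclosed w hwC x hxS hwx)
        have hwS : w ∉ S := fun h => by
          have : w ∈ C ∩ S := ⟨hwC, h⟩
          rw [hdisj] at this
          exact this
        exact ⟨Or.inr ⟨hwS, x, hxS, hwx.symm⟩, hwN⟩
    calc k ≤ degIn G (S ∪ vBdry G C) v := hk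
      _ ≤ degIn G (S ∪ nbhd G S) v :=
        Set.ncard_le_ncard hssub ((hG v).inter_of_right _)
end

section
/- Let G be the graph obtained from the rooted (k+1)-ary tree by adding, for each vertex, a once-subdivided complete graph K_{k+1} on its k+1 successors, iterated over all subdividing vertices as in the construction. Then every finite subgraph H of G has a vertex of degree at most 2: if v is a vertex of H of maximal height and v is incident in H with a horizontal (subdivided-complete-graph) edge vw, then v or w has degree at most 2 in H; otherwise v has degree at most 1 in H. -/
open SimpleGraph Set

universe u
variable {V : Type u}

/-!
A vertex `v` of maximal height in `H` has no `H`-neighbour above it. If `v` has a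
horizontal `H`-edge `vw`, one endpoint is subdividing and also of maximal height; its
`H`-neighbours then all lie among its at most two neighbours not above it. Otherwise every
`H`-neighbour of `v` lies strictly below `v`, and there is at most one such vertex.
-/

namespace SimpleGraph.Subgraph

variable {G : SimpleGraph V} (H : G.Subgraph) (h : V → ℕ)

theorem ncard_neighborSet_le_of_forall_height_le {s : V} (hfin : (G.neighborSet s).Finite)
    {k : ℕ} (hk : {w | G.Adj s w ∧ h w ≠ h s + 1}.ncard ≤ k)
    (htop : ∀ u ∈ H.verts, h u ≤ h s) :
    (H.neighborSet s).ncard ≤ k := by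
  have hsubset : H.neighborSet s ⊆ {w | G.Adj s w ∧ h w ≠ h s + 1} := fun u hu =>
    ⟨H.adj_sub hu, by have := htop u hu.snd_mem; omega⟩
  exact (ncard_le_ncard hsubset (hfin.subset fun _ hu => hu.1)).trans hk

theorem ncard_neighborSet_le_one_of_forall_height_lt {v : V}
    (hdown : {w | G.Adj v w ∧ h w < h v}.Subsingleton)
    (hbelow : ∀ w, H.Adj v w → h w < h v) :
    (H.neighborSet v).ncard ≤ 1 := by
  have hss : (H.neighborSet v).Subsingleton :=
    hdown.anti fun w hw => ⟨H.adj_sub hw, hbelow w hw⟩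
  exact (ncard_le_one_iff hss.finite).2 fun ha hb => hss ha hb

end SimpleGraph.Subgraph

/-- Abstract version of the structure of the graph `G` from Theorem 3: there is a
height function `h` and a set `Sub` of subdividing vertices such that every edge is
vertical (heights differing by one) or horizontal (equal heights, with a subdividing
endvertex); every vertex has at most one strictly lower neighbour; and every
subdividing vertex has at most two neighbours that do not lie strictly above it.
Then every finite nonempty subgraph `H` of `G` has a vertex `v` of degree at most 2 in `H`:
taking `v` of maximal height, either `v` lies on a horizontal edge `vw` of `H` and then
`v` or `w` has degree at most 2, or else `v` has degree at most 1. -/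
theorem stmt7 (G : SimpleGraph V) (hG : LocFin G)
    (h : V → ℕ) (Sub : Set V)
    (hedges : ∀ v w, G.Adj v w →
      h w = h v + 1 ∨ h v = h w + 1 ∨ (h v = h w ∧ (v ∈ Sub ∨ w ∈ Sub)))
    (hdown : ∀ v, {w | G.Adj v w ∧ h w < h v}.Subsingleton)
    (hsub : ∀ s ∈ Sub, {w | G.Adj s w ∧ h w ≠ h s + 1}.ncard ≤ 2)
    (H : G.Subgraph) (hfin : H.verts.Finite) (hne : H.verts.Nonempty) :
    ∃ v ∈ H.verts, (H.neighborSet v).ncard ≤ 2 := by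
  obtain ⟨v, hv, htop⟩ := exists_max_image H.verts h hfin hne
  have top_sub_deg : ∀ s ∈ Sub, h s = h v → (H.neighborSet s).ncard ≤ 2 :=
    fun s hs hsv => H.ncard_neighborSet_le_of_forall_height_le h (hG s) (hsub s hs)
      (hsv ▸ htop)
  by_cases hhor : ∃ w, H.Adj v w ∧ h w = h v
  · obtain ⟨w, hvw, hw⟩ := hhor
    rcases hedges v w (H.adj_sub hvw) with _ | _ | ⟨-, hvS | hwS⟩
    · omega
    · omega
    · exact ⟨v, hv, top_sub_deg v hvS rfl⟩
    · exact ⟨w, hvw.snd_mem, top_sub_deg w hwS hw⟩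
  · have hbelow : ∀ w, H.Adj v w → h w < h v := fun w hw =>
      lt_of_le_of_ne (htop w hw.snd_mem) fun heq => hhor ⟨w, hw, heq⟩
    exact ⟨v, hv, (H.ncard_neighborSet_le_one_of_forall_height_lt h (hdown v) hbelow).trans
      one_le_two⟩
end

section
/- Let G be a locally finite connected graph with minimum degree at least k, and suppose there are finitely many pairwise disjoint regions C₁,…,C_n of G such that every end of G lives in some C_i, each C_i satisfies δ⁺_G(C_i) ≥ k (every boundary vertex of C_i has degree at least k in G[N(C_i), C_i]), and some vertex v of G lies in none of the C_i. Then G has a finite nonempty subgraph of minimum degree at least k. -/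
open SimpleGraph Set

universe u
variable {V : Type u}

/-! Let `E` be the set of vertices outside the interiors `Cᵢ \ V⁺(Cᵢ)`. In `G[E]` a vertex outside
all regions keeps all its neighbours, and a boundary vertex of `Cᵢ` keeps its neighbours in
`N(Cᵢ) ∪ V⁺(Cᵢ)`, so `G[E]` has minimum degree at least `k`. It is finite: as `G` is connected,
every component of `G[E]` contains a fixed vertex or meets the finite set `V⁺(E) ⊆ ⋃ V⁺(Cᵢ)`, so
if `E` were infinite, Kőnig's lemma would give a ray in `G[E]`. That ray has a tail in some `Cᵢ`,
hence in the finite set `Cᵢ ∩ E ⊆ V⁺(Cᵢ)`, which is absurd. -/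

section Konig

variable {H : SimpleGraph V}

def reachAvoiding (H : SimpleGraph V) (A : Set V) (x : V) : Set V :=
  {w | ∃ p : H.Walk x w, ∀ u ∈ p.support, u ∉ A}

lemma notMem_of_reachAvoiding_nonempty {A : Set V} {x : V}
    (h : (reachAvoiding H A x).Nonempty) : x ∉ A := by
  obtain ⟨_, p, hp⟩ := h
  exact hp x p.start_mem_support

lemma exists_adj_reachAvoiding_insert_infinite (hH : ∀ x, (H.neighborSet x).Finite)
    {A : Set V} {x : V} (hx : (reachAvoiding H A x).Infinite) :
    ∃ y, H.Adj x y ∧ (reachAvoiding H (insert x A) y).Infinite := by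
  classical
  by_contra! hfin
  refine hx (((hH x).biUnion hfin).insert x |>.subset ?_)
  rintro w ⟨p, hp⟩
  -- a path from `x` leaves `x` for good after its first edge
  obtain ⟨q, hq, hqA⟩ : ∃ q : H.Walk x w, q.IsPath ∧ ∀ u ∈ q.support, u ∉ A :=
    ⟨p.bypass, p.bypass_isPath, fun u hu => hp u (p.support_bypass_subset_support hu)⟩
  cases q with
  | nil => exact mem_insert _ _
  | @cons _ y _ hxy q =>
    rw [Walk.cons_isPath_iff] at hq
    refine mem_insert_of_mem _ (mem_biUnion hxy ⟨q, fun u hu => ?_⟩)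
    rintro (rfl | huA)
    · exact hq.2 hu
    · exact hqA u (by simp [hu]) huA

/-- Kőnig's lemma. -/
theorem exists_isRay_of_reachable_infinite (hH : ∀ x, (H.neighborSet x).Finite) {v : V}
    (hv : {w | H.Reachable v w}.Infinite) : ∃ f : ℕ → V, IsRay H f := by
  let S := {p : V × Set V // (reachAvoiding H p.2 p.1).Infinite}
  have step (p : S) := exists_adj_reachAvoiding_insert_infinite hH p.2
  let next (p : S) : S := ⟨((step p).choose, insert p.1.1 p.1.2), (step p).choose_spec.2⟩
  have hstart : (reachAvoiding H ∅ v).Infinite :=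
    hv.mono fun _ (hw : H.Reachable v _) => ⟨hw.some, fun u _ => notMem_empty u⟩
  let s (m : ℕ) : S := next^[m] ⟨(v, ∅), hstart⟩
  have hs (m : ℕ) : s (m + 1) = next (s m) := Function.iterate_succ_apply' _ _ _
  have hmono : Monotone fun m => (s m).1.2 :=
    monotone_nat_of_le_succ fun m => by simp only [hs m, next]; exact subset_insert _ _
  have hvisited {l m : ℕ} (hlm : l < m) : (s l).1.1 ∈ (s m).1.2 :=
    hmono (Nat.succ_le_of_lt hlm) (by simp only [hs l, next]; exact mem_insert _ _)
  refine ⟨fun m => (s m).1.1, Function.Injective.of_lt_imp_ne fun l m hlm heq => ?_,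
    fun m => by simp only [hs m, next]; exact (step (s m)).choose_spec.1⟩
  exact notMem_of_reachAvoiding_nonempty (s m).2.nonempty (heq ▸ hvisited hlm)

end Konig

lemma IsRay.mono {G H : SimpleGraph V} (hGH : G ≤ H) {f : ℕ → V} (hf : IsRay G f) :
    IsRay H f :=
  ⟨hf.1, fun m => hGH (hf.2 m)⟩

lemma IsRay.not_hasTailIn_of_finite {G : SimpleGraph V} {f : ℕ → V} (hf : IsRay G f)
    {S : Set V} (hS : S.Finite) : ¬ HasTailIn f S := by
  rintro ⟨N, hN⟩
  exact Ici_infinite N ((hS.preimage hf.1.injOn).subset hN)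

section InducedSpanning

variable {G : SimpleGraph V} {W : Set V}

/-- `G[W]`, with the vertices outside `W` kept as isolated vertices. -/
def inducedSpanning (G : SimpleGraph V) (W : Set V) : SimpleGraph V :=
  ((⊤ : G.Subgraph).induce W).spanningCoe

@[simp]
lemma inducedSpanning_adj {x y : V} :
    (inducedSpanning G W).Adj x y ↔ x ∈ W ∧ y ∈ W ∧ G.Adj x y := by
  simp [inducedSpanning]

lemma inducedSpanning_le : inducedSpanning G W ≤ G := fun _ _ h => (inducedSpanning_adj.1 h).2.2

lemma SimpleGraph.Walk.reachable_or_exists_vBdry :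
    ∀ {w v : V} (_ : G.Walk w v), w ∈ W →
      (inducedSpanning G W).Reachable w v ∨
        ∃ x ∈ vBdry G W, (inducedSpanning G W).Reachable w x
  | _, _, .nil, _ => Or.inl .rfl
  | w, _, .cons (v := c) hwc q, hw => by
    by_cases hc : c ∈ W
    · have hwc' : (inducedSpanning G W).Adj w c := inducedSpanning_adj.2 ⟨hw, hc, hwc⟩
      rcases Walk.reachable_or_exists_vBdry q hc with h | ⟨x, hx, h⟩
      · exact Or.inl (hwc'.reachable.trans h)
      · exact Or.inr ⟨x, hx, hwc'.reachable.trans h⟩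
    · exact Or.inr ⟨w, ⟨hw, c, hc, hwc⟩, .rfl⟩

lemma finite_of_vBdry_finite (hG : LocFin G) (hconn : G.Preconnected)
    (hW : (vBdry G W).Finite) (hray : ∀ f, IsRay G f → ¬ ∀ m, f m ∈ W) : W.Finite := by
  rcases W.eq_empty_or_nonempty with rfl | ⟨w₀, -⟩
  · exact finite_empty
  by_contra hinf
  have hcover : W ⊆ ⋃ b ∈ insert w₀ (vBdry G W), {w | (inducedSpanning G W).Reachable b w} := by
    intro w hw
    rcases (hconn w w₀).some.reachable_or_exists_vBdry hw with h | ⟨x, hx, h⟩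
    · exact mem_biUnion (mem_insert _ _) h.symm
    · exact mem_biUnion (mem_insert_of_mem _ hx) h.symm
  obtain ⟨b, -, hb⟩ : ∃ b ∈ insert w₀ (vBdry G W),
      {w | (inducedSpanning G W).Reachable b w}.Infinite := by
    by_contra! h
    exact hinf (((hW.insert w₀).biUnion h).subset hcover)
  obtain ⟨f, hf⟩ := exists_isRay_of_reachable_infinite
    (fun x => (hG x).subset (neighborSet_mono inducedSpanning_le x)) hb
  exact hray f (hf.mono inducedSpanning_le) fun m => (inducedSpanning_adj.1 (hf.2 m)).1

end InducedSpanning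

section Regions

variable {G : SimpleGraph V} {n : ℕ} {C : Fin n → Set V}

lemma mem_of_adj_of_mem_diff_vBdry {U : Set V} {x y : V} (hy : y ∈ U \ vBdry G U)
    (hxy : G.Adj x y) : x ∈ U := by
  by_contra hx
  exact hy.2 ⟨hy.1, x, hx, hxy.symm⟩

def exteriorWithBdry (G : SimpleGraph V) (C : Fin n → Set V) : Set V :=
  (⋃ i, C i \ vBdry G (C i))ᶜ

lemma mem_vBdry_of_mem_exteriorWithBdry {x : V} (hx : x ∈ exteriorWithBdry G C) {i : Fin n}
    (hxi : x ∈ C i) : x ∈ vBdry G (C i) := by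
  by_contra h
  exact hx (mem_iUnion_of_mem i ⟨hxi, h⟩)

lemma vBdry_exteriorWithBdry_subset :
    vBdry G (exteriorWithBdry G C) ⊆ ⋃ i, vBdry G (C i) := by
  rintro x ⟨hx, y, hy, hxy⟩
  obtain ⟨i, hyi⟩ := mem_iUnion.1 (not_not.1 hy)
  exact mem_iUnion_of_mem i
    (mem_vBdry_of_mem_exteriorWithBdry hx (mem_of_adj_of_mem_diff_vBdry hyi hxy))

lemma neighborSet_subset_exteriorWithBdry {x : V} (hx : ∀ i, x ∉ C i) :
    G.neighborSet x ⊆ exteriorWithBdry G C := by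
  intro y hxy hy
  obtain ⟨i, hyi⟩ := mem_iUnion.1 hy
  exact hx i (mem_of_adj_of_mem_diff_vBdry hyi hxy)

lemma nbhd_union_vBdry_subset_exteriorWithBdry (hdisj : ∀ i j, i ≠ j → C i ∩ C j = ∅)
    (i : Fin n) : nbhd G (C i) ∪ vBdry G (C i) ⊆ exteriorWithBdry G C := by
  have hsame {j : Fin n} {x : V} (hxi : x ∈ C i) (hxj : x ∈ C j) : j = i := by
    by_contra hji
    exact (hdisj j i hji).subset ⟨hxj, hxi⟩
  rintro x (⟨hxi, u, hu, hux⟩ | hx) hx'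
  · obtain ⟨j, hxj⟩ := mem_iUnion.1 hx'
    obtain rfl := hsame hu (mem_of_adj_of_mem_diff_vBdry hxj hux)
    exact hxi hxj.1
  · obtain ⟨j, hxj⟩ := mem_iUnion.1 hx'
    obtain rfl := hsame hx.1 hxj.1
    exact hxj.2 hx

lemma exteriorWithBdry_finite (hG : LocFin G) (hconn : G.Connected)
    (hreg : ∀ i, IsRegion G (C i)) (hends : ∀ f, IsRay G f → ∃ i, HasTailIn f (C i)) :
    (exteriorWithBdry G C).Finite := by
  refine finite_of_vBdry_finite hG hconn.preconnected
    ((finite_iUnion fun i => (hreg i).2).subset vBdry_exteriorWithBdry_subset) fun f hf hfE => ?_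
  obtain ⟨i, N, hN⟩ := hends f hf
  exact hf.not_hasTailIn_of_finite (hreg i).2
    ⟨N, fun m hm => mem_vBdry_of_mem_exteriorWithBdry (hfE m) (hN m hm)⟩

end Regions

/-- If `G` is locally finite connected with `δ(G) ≥ k`, and `C₁, …, Cₙ` are pairwise
disjoint regions with `δ⁺_G(Cᵢ) ≥ k` such that every end of `G` lives in some `Cᵢ`
(every ray has a tail in some `Cᵢ`) and some vertex `v` lies in none of them, then `G`
has a finite nonempty subgraph of minimum degree at least `k`. -/
theorem stmt10 (G : SimpleGraph V) (hG : LocFin G) (hconn : G.Connected) (k : ℕ)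
    (hdeg : ∀ v, k ≤ (G.neighborSet v).ncard)
    (n : ℕ) (C : Fin n → Set V)
    (hreg : ∀ i, IsRegion G (C i))
    (hout : ∀ i, minOutDegGE G (C i) k)
    (hdisj : ∀ i j, i ≠ j → C i ∩ C j = ∅)
    (hends : ∀ f, IsRay G f → ∃ i, HasTailIn f (C i))
    (v : V) (hv : ∀ i, v ∉ C i) :
    ∃ H : G.Subgraph, H.verts.Finite ∧ H.verts.Nonempty ∧
      ∀ w ∈ H.verts, k ≤ (H.neighborSet w).ncard := by
  set E := exteriorWithBdry G C
  have hvE : v ∈ E := fun hv' => by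
    obtain ⟨i, hvi⟩ := mem_iUnion.1 hv'
    exact hv i hvi.1
  refine ⟨(⊤ : G.Subgraph).induce E, exteriorWithBdry_finite hG hconn hreg hends, ⟨v, hvE⟩,
    fun w (hw : w ∈ E) => ?_⟩
  have hnbr : ((⊤ : G.Subgraph).induce E).neighborSet w = E ∩ G.neighborSet w := by
    ext; simp [hw]
  rw [hnbr]
  by_cases hwC : ∃ i, w ∈ C i
  · obtain ⟨i, hwi⟩ := hwC
    calc k ≤ degIn G (nbhd G (C i) ∪ vBdry G (C i)) w :=
          hout i w (mem_vBdry_of_mem_exteriorWithBdry hw hwi)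
      _ ≤ (E ∩ G.neighborSet w).ncard :=
          ncard_le_ncard (inter_subset_inter_left _
            (nbhd_union_vBdry_subset_exteriorWithBdry hdisj i)) ((hG w).inter_of_right _)
  · simp only [not_exists] at hwC
    rw [inter_eq_right.2 (neighborSet_subset_exteriorWithBdry hwC)]
    exact hdeg w
end

section
/- Let G be a locally finite infinite graph with at most countably many ends, such that δ(G) ≥ k, and such that every end ω of G has a defining sequence C₀ ⊋ C₁ ⊋ … of regions with δ⁺_G(C_n) ≥ k and G - C_n connected for all n. Then G has a finite nonempty subgraph of minimum degree at least k. -/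
/-!
If the component `K` of a vertex `v₀` is finite, it is the required subgraph. Otherwise list the
countably many ends and build increasing finite families `𝓛 n` of disjoint regions of minimum
out-degree at least `k`, where `𝓛 (n + 1)` has a region containing a member of the defining
sequence of the `n`-th end. Deleting from `K` the interiors of the regions of a family leaves a
set in which every vertex keeps at least `k` neighbours, so it suffices that some `𝓛 n` covers
all but finitely many vertices of `K`; if none does, König's lemma yields an end of `K` that no
family captures.
-/

open SimpleGraph Set

universe u
variable {V : Type u}

theorem Antitone.exists_disjoint_of_iInter_eq_empty {α : Type*} {C : ℕ → Set α} (hC : Antitone C)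
    (hempty : ⋂ n, C n = ∅) {F : Set α} (hF : F.Finite) : ∃ n, Disjoint (C n) F := by
  have hleave : ∀ v ∈ F, ∀ᶠ n in Filter.atTop, v ∉ C n := fun v _ => by
    obtain ⟨n, hn⟩ : ∃ n, v ∉ C n := by simpa using Set.eq_empty_iff_forall_notMem.1 hempty v
    exact Filter.eventually_atTop.2 ⟨n, fun m hm hv => hn (hC hm hv)⟩
  obtain ⟨n, hn⟩ := ((hF.eventually_all).2 hleave).exists
  exact ⟨n, Set.disjoint_right.2 hn⟩

section LocFin

variable {G : SimpleGraph V}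

theorem LocFin.mono {H : SimpleGraph V} (hG : LocFin G) (hHG : H ≤ G) : LocFin H :=
  fun v => (hG v).subset fun _ hw => hHG hw

theorem nbhd_finite (hG : LocFin G) {U : Set V} (hU : U.Finite) : (nbhd G U).Finite :=
  (hU.biUnion fun v _ => hG v).subset fun _ ⟨_, _, hv, hvw⟩ => Set.mem_biUnion hv hvw

end LocFin

namespace SimpleGraph

variable {G : SimpleGraph V}

theorem Reachable.mem_of_adj_closed {R : Set V} (hR : ∀ a b, G.Adj a b → a ∈ R → b ∈ R)
    {a b : V} (h : G.Reachable a b) (ha : a ∈ R) : b ∈ R := by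
  obtain ⟨p⟩ := h
  induction p with
  | nil => exact ha
  | cons hadj _ ih => exact ih (hR _ _ hadj ha)

/-- Models `G - S` on the same vertex type: the vertices of `S` stay, isolated. -/
def isolateVerts (G : SimpleGraph V) (S : Set V) : SimpleGraph V where
  Adj a b := G.Adj a b ∧ a ∉ S ∧ b ∉ S
  symm := ⟨fun _ _ h => ⟨h.1.symm, h.2.2, h.2.1⟩⟩
  loopless := ⟨fun _ h => G.loopless.1 _ h.1⟩

theorem isolateVerts_le (S : Set V) : G.isolateVerts S ≤ G := fun _ _ h => h.1

theorem isolateVerts_anti {S T : Set V} (h : S ⊆ T) : G.isolateVerts T ≤ G.isolateVerts S :=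
  fun _ _ hab => ⟨hab.1, fun ha => hab.2.1 (h ha), fun hb => hab.2.2 (h hb)⟩

theorem isolateVerts_empty : G.isolateVerts ∅ = G := by
  ext a b
  simp [isolateVerts]

theorem isolateVerts_isolateVerts (S T : Set V) :
    (G.isolateVerts T).isolateVerts S = G.isolateVerts (S ∪ T) := by
  ext a b
  simp only [isolateVerts, Set.mem_union]
  tauto

/-- For `v ∉ S`, the vertex set of the component of `G - S` containing `v`. -/
def componentOf (G : SimpleGraph V) (S : Set V) (v : V) : Set V :=
  {u | (G.isolateVerts S).Reachable v u}

variable {S T : Set V} {u v w x : V}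

theorem componentOf_isolateVerts :
    (G.isolateVerts T).componentOf S v = G.componentOf (S ∪ T) v := by
  rw [componentOf, isolateVerts_isolateVerts, componentOf]

theorem mem_componentOf_self : v ∈ G.componentOf S v := Reachable.refl v

theorem componentOf_eq_of_mem (h : u ∈ G.componentOf S v) :
    G.componentOf S u = G.componentOf S v :=
  Set.ext fun _ => ⟨h.trans, h.symm.trans⟩

theorem componentOf_anti (h : S ⊆ T) (v : V) : G.componentOf T v ⊆ G.componentOf S v :=
  fun _ hu => hu.mono (isolateVerts_anti h)

theorem componentOf_empty : G.componentOf ∅ v = {u | G.Reachable v u} := by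
  rw [componentOf, isolateVerts_empty]

theorem notMem_of_mem_componentOf (hv : v ∉ S) (hu : u ∈ G.componentOf S v) : u ∉ S :=
  Reachable.mem_of_adj_closed (G := G.isolateVerts S) (R := Sᶜ) (fun _ _ hab _ => hab.2.2) hu hv

theorem disjoint_componentOf (hv : v ∉ S) : Disjoint (G.componentOf S v) S :=
  Set.disjoint_left.2 fun _ => notMem_of_mem_componentOf hv

theorem mem_componentOf_of_adj (hv : v ∉ S) (hu : u ∈ G.componentOf S v) (hw : w ∉ S)
    (hadj : G.Adj u w) : w ∈ G.componentOf S v :=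
  hu.trans ⟨Walk.cons ⟨hadj, notMem_of_mem_componentOf hv hu, hw⟩ Walk.nil⟩

theorem connected_induce_componentOf (S : Set V) (v : V) :
    (G.induce (G.componentOf S v)).Connected := by
  have h : G.componentOf S v = ((G.isolateVerts S).connectedComponentMk v).supp := by
    ext u
    simp only [componentOf, ConnectedComponent.mem_supp_iff,
      ConnectedComponent.eq]
    exact ⟨Reachable.symm, Reachable.symm⟩
  rw [h]
  exact (ConnectedComponent.connected_toSimpleGraph _).mono
    (comap_monotone _ (isolateVerts_le S))

theorem isCompOf_componentOf (hv : v ∉ S) : IsCompOf G S (G.componentOf S v) :=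
  ⟨⟨v, mem_componentOf_self⟩, (disjoint_componentOf hv).inter_eq,
    connected_induce_componentOf S v, fun _ hu _ hw hadj => mem_componentOf_of_adj hv hu hw hadj⟩

theorem IsCompOf.eq_componentOf {C : Set V} (hC : IsCompOf G S C) (hx : x ∈ C) :
    C = G.componentOf S x := by
  obtain ⟨-, hCS, hconn, hclosed⟩ := hC
  have hCS' : ∀ y ∈ C, y ∉ S := fun y hy hyS => (Set.eq_empty_iff_forall_notMem.1 hCS) y ⟨hy, hyS⟩
  refine Set.Subset.antisymm (fun y hy => ?_) fun y hy =>
    Reachable.mem_of_adj_closed (G := G.isolateVerts S)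
      (fun a b hab ha => hclosed a ha b hab.2.2 hab.1) hy hx
  let φ : G.induce C →g G.isolateVerts S :=
    ⟨Subtype.val, fun {a b} hab => ⟨hab, hCS' a a.2, hCS' b b.2⟩⟩
  exact (hconn.preconnected ⟨x, hx⟩ ⟨y, hy⟩).map φ

theorem IsCompOf.eq_of_hasTailIn {C C' : Set V} {f : ℕ → V} (hC : IsCompOf G S C)
    (hC' : IsCompOf G S C') (hf : HasTailIn f C) (hf' : HasTailIn f C') : C = C' := by
  obtain ⟨N, hN⟩ := hf
  obtain ⟨N', hN'⟩ := hf'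
  rw [hC.eq_componentOf (hN _ (le_max_left N N')), hC'.eq_componentOf (hN' _ (le_max_right N N'))]

theorem subset_of_preconnected_of_disjoint_vBdry {C R : Set V}
    (hC : (G.induce C).Preconnected) (hdisj : Disjoint C (vBdry G R)) (h : (C ∩ R).Nonempty) :
    C ⊆ R := by
  obtain ⟨x, hxC, hxR⟩ := h
  intro y hy
  refine Reachable.mem_of_adj_closed (R := {a : C | a.1 ∈ R}) (fun a b hab ha => ?_)
    (hC ⟨x, hxC⟩ ⟨y, hy⟩) hxR
  by_contra hb
  exact Set.disjoint_left.1 hdisj a.2 ⟨ha, b, hb, hab⟩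

theorem componentOf_subset_of_vBdry_subset {R : Set V} (hv : v ∉ S) (hR : vBdry G R ⊆ S)
    (h : (G.componentOf S v ∩ R).Nonempty) : G.componentOf S v ⊆ R :=
  subset_of_preconnected_of_disjoint_vBdry (connected_induce_componentOf S v).preconnected
    ((disjoint_componentOf hv).mono_right hR) h

theorem exists_adj_of_reachable_mem (hu : u ∉ S) (hw : w ∈ S) (h : G.Reachable u w) :
    ∃ x ∈ G.componentOf S u, ∃ s ∈ S, G.Adj x s := by
  by_contra! hno
  have hclosed : ∀ a b, G.Adj a b → a ∈ G.componentOf S u → b ∈ G.componentOf S u :=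
    fun a b hab ha => mem_componentOf_of_adj hu ha (fun hb => hno a ha b hb hab) hab
  exact Set.disjoint_left.1 (disjoint_componentOf hu)
    (h.mem_of_adj_closed hclosed mem_componentOf_self) hw

end SimpleGraph

section Rays

variable {G : SimpleGraph V} {S : Set V} {f g h : ℕ → V}

theorem IsRay.eventually_notMem (hf : IsRay G f) (hS : S.Finite) :
    ∀ᶠ n in Filter.atTop, f n ∉ S := by
  rw [← Nat.cofinite_eq_atTop]
  exact hf.1.tendsto_cofinite.eventually hS.eventually_cofinite_notMem

theorem IsRay.exists_hasTailIn_componentOf (hf : IsRay G f) (hS : S.Finite) :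
    ∃ N, f N ∉ S ∧ HasTailIn f (G.componentOf S (f N)) := by
  obtain ⟨N, hN⟩ := Filter.eventually_atTop.1 (hf.eventually_notMem hS)
  refine ⟨N, hN N le_rfl, N, fun n hn => ?_⟩
  induction n, hn using Nat.le_induction with
  | base => exact mem_componentOf_self
  | succ n hn ih => exact mem_componentOf_of_adj (hN N le_rfl) ih (hN _ (by omega)) (hf.2 n)

theorem rayEquiv_refl (hf : IsRay G f) : RayEquiv G f f := fun _ hS =>
  let ⟨_, hN, hfN⟩ := hf.exists_hasTailIn_componentOf hS
  ⟨_, isCompOf_componentOf hN, hfN, hfN⟩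

theorem RayEquiv.symm (hfg : RayEquiv G f g) : RayEquiv G g f := fun S hS =>
  let ⟨C, hC, hf, hg⟩ := hfg S hS
  ⟨C, hC, hg, hf⟩

theorem RayEquiv.hasTailIn {D : Set V} (hfg : RayEquiv G f g) (hS : S.Finite)
    (hD : IsCompOf G S D) (hf : HasTailIn f D) : HasTailIn g D := by
  obtain ⟨C, hC, hfC, hgC⟩ := hfg S hS
  rwa [hD.eq_of_hasTailIn hC hf hfC]

theorem RayEquiv.trans (hfg : RayEquiv G f g) (hgh : RayEquiv G g h) : RayEquiv G f h :=
  fun S hS =>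
    let ⟨C, hC, hfC, hgC⟩ := hfg S hS
    ⟨C, hC, hfC, hgh.hasTailIn hS hC hgC⟩

theorem rayEquiv_equivalence (G : SimpleGraph V) :
    Equivalence fun p q : {f : ℕ → V // IsRay G f} => RayEquiv G p.1 q.1 :=
  ⟨fun p => rayEquiv_refl p.2, RayEquiv.symm, RayEquiv.trans⟩

theorem exists_seq_rayEquiv
    (hcount : Countable (Quot fun p q : {f : ℕ → V // IsRay G f} => RayEquiv G p.1 q.1))
    (hray : ∃ f, IsRay G f) :
    ∃ σ : ℕ → ℕ → V, (∀ n, IsRay G (σ n)) ∧ ∀ f, IsRay G f → ∃ n, RayEquiv G (σ n) f := by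
  obtain ⟨f₀, hf₀⟩ := hray
  have := Nonempty.intro (Quot.mk (fun p q : {f : ℕ → V // IsRay G f} => RayEquiv G p.1 q.1)
    ⟨f₀, hf₀⟩)
  obtain ⟨e, he⟩ := countable_iff_exists_surjective.1 hcount
  refine ⟨fun n => (e n).out.1, fun n => (e n).out.2, fun f hf => ?_⟩
  obtain ⟨n, hn⟩ := he (Quot.mk _ ⟨f, hf⟩)
  refine ⟨n, (rayEquiv_equivalence G).eqvGen_iff.1 (Quot.eqvGen_exact (a := (e n).out)
    (b := ⟨f, hf⟩) ?_)⟩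
  rw [Quot.out_eq, hn]

end Rays

section Konig

variable {G : SimpleGraph V}

theorem exists_adj_infinite_componentOf (hG : LocFin G) {T : Set V} {x : V} (hx : x ∉ T)
    (hinf : (G.componentOf T x).Infinite) :
    ∃ y, G.Adj x y ∧ y ∉ insert x T ∧ (G.componentOf (insert x T) y).Infinite := by
  have hcover : G.componentOf T x ⊆ insert x (⋃ y ∈ G.neighborSet x \ insert x T,
      G.componentOf (insert x T) y) := by
    intro u hu
    by_cases hux : u ∈ insert x T
    · exact Or.inl ((Set.mem_insert_iff.1 hux).resolve_right (notMem_of_mem_componentOf hx hu))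
    obtain ⟨z, hz, _, rfl, hzs⟩ := exists_adj_of_reachable_mem (G := G.isolateVerts T)
      (S := {x}) (fun h => hux (Or.inl h)) rfl hu.symm
    rw [componentOf_isolateVerts, ← Set.insert_eq] at hz
    exact Or.inr (Set.mem_biUnion ⟨hzs.1.symm, notMem_of_mem_componentOf hux hz⟩
      (by rw [componentOf_eq_of_mem hz]; exact mem_componentOf_self))
  by_contra! hfin
  refine hinf (((((hG x).sdiff).biUnion fun y hy => ?_).insert x).subset hcover)
  by_contra hyinf
  exact hyinf (hfin y hy.1 hy.2)

theorem exists_isRay (hG : LocFin G) {x : V} (hx : (G.componentOf ∅ x).Infinite) :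
    ∃ f, IsRay G f := by
  let State := {p : Set V × V // p.2 ∉ p.1 ∧ (G.componentOf p.1 p.2).Infinite}
  choose y hadj hy hinf using fun p : State => exists_adj_infinite_componentOf hG p.2.1 p.2.2
  let next : State → State := fun p => ⟨(insert p.1.2 p.1.1, y p), hy p, hinf p⟩
  let s : ℕ → State := fun n => next^[n] ⟨(∅, x), Set.notMem_empty x, hx⟩
  have hs : ∀ n, s (n + 1) = next (s n) := fun n => Function.iterate_succ_apply' next n _
  have hmono : Monotone fun n => (s n).1.1 :=
    monotone_nat_of_le_succ fun n => by rw [hs]; exact Set.subset_insert _ _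
  have hvisited : ∀ n, (s n).1.2 ∈ (s (n + 1)).1.1 := fun n => by rw [hs]; exact Set.mem_insert _ _
  refine ⟨fun n => (s n).1.2, Function.Injective.of_lt_imp_ne fun m n hmn heq => ?_, fun n => ?_⟩
  · exact (s n).2.1 (heq ▸ hmono hmn (hvisited m))
  · simp only [hs]
    exact hadj (s n)

end Konig

section NestedRay

variable {G : SimpleGraph V}

theorem exists_walk_support_subset {D : Set V} (hD : (G.induce D).Preconnected) {a b : V}
    (ha : a ∈ D) (hb : b ∈ D) : ∃ p : G.Walk a b, ∀ v ∈ p.support, v ∈ D := by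
  obtain ⟨q⟩ := hD ⟨a, ha⟩ ⟨b, hb⟩
  let p := q.map (Embedding.induce D).toHom
  have hp : ∀ v ∈ p.support, v ∈ D := by
    simp only [p, Walk.support_map, List.mem_map]
    rintro _ ⟨w, -, rfl⟩
    exact w.2
  exact ⟨p, hp⟩

/-- The ray is found by König's lemma in the union `H` of walks `P n ⊆ D n` joining points
`x n ∈ D n` (`H` is infinite as `⋂ n, D n = ∅`). Its tail avoids the finitely many walks `P m`
with `m < n`, hence lies in `D n`. -/
theorem exists_isRay_forall_hasTailIn (hG : LocFin G) {D : ℕ → Set V}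
    (hconn : ∀ n, (G.induce (D n)).Connected) (hanti : Antitone D) (hempty : ⋂ n, D n = ∅) :
    ∃ f, IsRay G f ∧ ∀ n, HasTailIn f (D n) := by
  have hne : ∀ n, ∃ v, v ∈ D n := fun n => Set.nonempty_coe_sort.1 (hconn n).nonempty
  choose x hx using hne
  have hx' : ∀ n, x (n + 1) ∈ D n := fun n => hanti n.le_succ (hx (n + 1))
  choose P hP using fun n => exists_walk_support_subset (hconn n).preconnected (hx n) (hx' n)
  let H : SimpleGraph V := fromEdgeSet (⋃ n, {e | e ∈ (P n).edges})
  have hHG : H ≤ G := (fromEdgeSet_le G).2 fun e he => by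
    obtain ⟨n, hn⟩ := Set.mem_iUnion.1 he.1
    exact (P n).edges_subset_edgeSet hn
  have hPH : ∀ n, H.Reachable (x n) (x (n + 1)) := fun n =>
    ((P n).transfer H fun e he => by
      rw [edgeSet_fromEdgeSet]
      exact ⟨Set.mem_iUnion.2 ⟨n, he⟩, G.not_isDiag_of_mem_edgeSet ((P n).edges_subset_edgeSet he)⟩
      ).reachable
  have hreach : ∀ n, H.Reachable (x 0) (x n) := fun n => by
    induction n with
    | zero => rfl
    | succ n ih => exact ih.trans (hPH n)
  have hxinf : (Set.range x).Infinite := fun hfin => by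
    obtain ⟨n, hn⟩ := hanti.exists_disjoint_of_iInter_eq_empty hempty hfin
    exact Set.disjoint_left.1 hn (hx n) (Set.mem_range_self n)
  obtain ⟨f, hf⟩ := exists_isRay (hG.mono hHG) (x := x 0)
    (hxinf.mono (by rintro _ ⟨n, rfl⟩; simpa [componentOf_empty] using hreach n))
  have hfP : ∀ t, ∃ m, f t ∈ (P m).support := fun t => by
    obtain ⟨m, hm⟩ := Set.mem_iUnion.1 ((fromEdgeSet_adj _).1 (hf.2 t)).1
    exact ⟨m, (P m).fst_mem_support_of_mem_edges hm⟩
  refine ⟨f, ⟨hf.1, fun t => hHG (hf.2 t)⟩, fun n => ?_⟩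
  have hF : (⋃ m < n, {v | v ∈ (P m).support}).Finite :=
    (Set.finite_lt_nat n).biUnion fun m _ => (P m).support.finite_toSet
  obtain ⟨N, hN⟩ := Filter.eventually_atTop.1 (hf.eventually_notMem hF)
  refine ⟨N, fun t ht => ?_⟩
  obtain ⟨m, hm⟩ := hfP t
  have hnm : n ≤ m := by
    by_contra! hmn
    exact hN t ht (Set.mem_biUnion hmn hm)
  exact hanti hnm (hP m _ hm)

end NestedRay

/-- The subgraph induced on `K` minus the interiors of the regions: a boundary vertex of a region
keeps all its neighbours in `G[S, R]`, any other vertex keeps all its neighbours. -/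
theorem exists_finite_subgraph_minDegree {G : SimpleGraph V} (hG : LocFin G) {k : ℕ}
    (hdeg : ∀ v, k ≤ (G.neighborSet v).ncard) {K : Set V}
    (hK : ∀ v ∈ K, ∀ w, G.Adj v w → w ∈ K) {𝓡 : Set (Set V)} (h𝓡 : 𝓡.Finite)
    (hdisj : 𝓡.PairwiseDisjoint id) (hbdry : ∀ R ∈ 𝓡, (vBdry G R).Finite)
    (hmin : ∀ R ∈ 𝓡, minOutDegGE G R k) (hfin : (K \ ⋃₀ 𝓡).Finite)
    (hne : (K \ ⋃₀ 𝓡).Nonempty) :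
    ∃ H : G.Subgraph, H.verts.Finite ∧ H.verts.Nonempty ∧
      ∀ w ∈ H.verts, k ≤ (H.neighborSet w).ncard := by
  let W : Set V := {w ∈ K | ∀ R ∈ 𝓡, w ∈ R → w ∈ vBdry G R}
  have hW : K \ ⋃₀ 𝓡 ⊆ W := fun w hw => ⟨hw.1, fun R hR hwR => (hw.2 ⟨R, hR, hwR⟩).elim⟩
  have hmem : ∀ w ∈ W, ∀ u, G.Adj w u → (∀ R ∈ 𝓡, u ∈ R → u ∉ vBdry G R → w ∉ R) → u ∈ W :=
    fun w hw u hwu hu => ⟨hK w hw.1 u hwu, fun R hR huR => by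
      by_contra hub
      exact hub ⟨huR, w, hu R hR huR hub, hwu.symm⟩⟩
  refine ⟨(⊤ : G.Subgraph).induce W, ?_, hne.mono hW, fun w hw => ?_⟩
  · refine (hfin.union (h𝓡.biUnion hbdry)).subset fun w hw => ?_
    by_cases hwR : ∃ R ∈ 𝓡, w ∈ R
    · obtain ⟨R, hR, hwR⟩ := hwR
      exact Or.inr (Set.mem_biUnion hR (hw.2 R hR hwR))
    · exact Or.inl ⟨hw.1, fun ⟨R, hR, hwR'⟩ => hwR ⟨R, hR, hwR'⟩⟩
  replace hw : w ∈ W := hw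
  have hnbr : ((⊤ : G.Subgraph).induce W).neighborSet w = W ∩ G.neighborSet w := by
    ext u
    simp [hw, and_comm]
  rw [hnbr]
  by_cases hwR : ∃ R ∈ 𝓡, w ∈ R
  · obtain ⟨R, hR, hwR⟩ := hwR
    refine (hmin R hR w (hw.2 R hR hwR)).trans (Set.ncard_le_ncard ?_ ((hG w).inter_of_right W))
    rintro u ⟨hu | hu, hwu⟩
    · refine ⟨hmem w hw u hwu fun R' hR' huR' _ hwR' => hu.1 ?_, hwu⟩
      rwa [hdisj.elim hR hR' (Set.not_disjoint_iff.2 ⟨w, hwR, hwR'⟩)]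
    · refine ⟨hmem w hw u hwu fun R' hR' huR' hub _ => hub ?_, hwu⟩
      rwa [← hdisj.elim hR hR' (Set.not_disjoint_iff.2 ⟨u, hu.1, huR'⟩)]
  · have hsub : G.neighborSet w ⊆ W := fun u hwu =>
      hmem w hw u hwu fun R hR _ _ hwR' => hwR ⟨R, hR, hwR'⟩
    rw [Set.inter_eq_right.2 hsub]
    exact hdeg w

section Packing

variable {G : SimpleGraph V} {k : ℕ} {v₀ : V}

structure IsPacking (G : SimpleGraph V) (k : ℕ) (v₀ : V) (𝓛 : Set (Set V)) : Prop where
  finite : 𝓛.Finite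
  pairwiseDisjoint : 𝓛.PairwiseDisjoint id
  isRegion : ∀ R ∈ 𝓛, IsRegion G R
  minOutDeg : ∀ R ∈ 𝓛, minOutDegGE G R k
  notMem : ∀ R ∈ 𝓛, v₀ ∉ R

theorem isPacking_empty : IsPacking G k v₀ ∅ :=
  ⟨Set.finite_empty, Set.pairwiseDisjoint_empty, by simp, by simp, by simp⟩

/-- A deep enough member `C m` avoids `v₀` and all boundaries `V⁺(R)`, so it either lies inside
some `R` or is disjoint from all of them and can be added. -/
theorem IsPacking.exists_superset {𝓛 : Set (Set V)} (h𝓛 : IsPacking G k v₀ 𝓛) {C : ℕ → Set V}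
    (hreg : ∀ m, IsRegion G (C m)) (hanti : Antitone C) (hempty : ⋂ m, C m = ∅)
    (hmin : ∀ m, minOutDegGE G (C m) k) :
    ∃ 𝓛', IsPacking G k v₀ 𝓛' ∧ 𝓛 ⊆ 𝓛' ∧ ∃ m, ∃ R ∈ 𝓛', C m ⊆ R := by
  have hZ : (insert v₀ (⋃ R ∈ 𝓛, vBdry G R)).Finite :=
    (h𝓛.finite.biUnion fun R hR => (h𝓛.isRegion R hR).2).insert v₀
  obtain ⟨m, hm⟩ := hanti.exists_disjoint_of_iInter_eq_empty hempty hZ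
  by_cases hmeet : ∃ R ∈ 𝓛, (C m ∩ R).Nonempty
  · obtain ⟨R, hR, hCR⟩ := hmeet
    refine ⟨𝓛, h𝓛, subset_rfl, m, R, hR, ?_⟩
    exact subset_of_preconnected_of_disjoint_vBdry (hreg m).1.preconnected
      (hm.mono_right fun v hv => Or.inr (Set.mem_biUnion hR hv)) hCR
  push Not at hmeet
  refine ⟨insert (C m) 𝓛, ⟨h𝓛.finite.insert _, h𝓛.pairwiseDisjoint.insert fun R hR _ =>
      Set.disjoint_iff_inter_eq_empty.2 (hmeet R hR), ?_, ?_, ?_⟩,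
    Set.subset_insert _ _, m, C m, Set.mem_insert _ _, subset_rfl⟩
  · simpa [hreg m] using h𝓛.isRegion
  · simpa [hmin m] using h𝓛.minOutDeg
  · simpa [Set.disjoint_right.1 hm (Set.mem_insert v₀ _)] using h𝓛.notMem

theorem exists_isPacking_seq {C : ℕ → ℕ → Set V} (hreg : ∀ n m, IsRegion G (C n m))
    (hanti : ∀ n, Antitone (C n)) (hempty : ∀ n, ⋂ m, C n m = ∅)
    (hmin : ∀ n m, minOutDegGE G (C n m) k) :
    ∃ 𝓛 : ℕ → Set (Set V), (∀ n, IsPacking G k v₀ (𝓛 n)) ∧ Monotone 𝓛 ∧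
      ∀ n, ∃ m, ∃ R ∈ 𝓛 (n + 1), C n m ⊆ R := by
  choose next hnext hsub hcov using fun n (𝓛 : {𝓛 // IsPacking G k v₀ 𝓛}) =>
    𝓛.2.exists_superset (hreg n) (hanti n) (hempty n) (hmin n)
  let seq : ℕ → {𝓛 // IsPacking G k v₀ 𝓛} :=
    fun n => Nat.rec ⟨∅, isPacking_empty⟩ (fun n 𝓛 => ⟨next n 𝓛, hnext n 𝓛⟩) n
  exact ⟨fun n => (seq n).1, fun n => (seq n).2, monotone_nat_of_le_succ fun n => hsub n (seq n),
    fun n => hcov n (seq n)⟩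

end Packing

section GoodComponents

variable {G : SimpleGraph V} {v₀ : V}

theorem exists_finite_exhaustion (hG : LocFin G) (v₀ : V) :
    ∃ B : ℕ → Set V, Monotone B ∧ (∀ n, (B n).Finite) ∧ v₀ ∈ B 0 ∧
      ∀ u ∈ G.componentOf ∅ v₀, ∃ n, u ∈ B n := by
  let B : ℕ → Set V := fun n => Nat.rec {v₀} (fun _ B => B ∪ nbhd G B) n
  refine ⟨B, monotone_nat_of_le_succ fun n => Set.subset_union_left, fun n => ?_, rfl,
    fun u hu => ?_⟩
  · induction n with
    | zero => exact Set.finite_singleton v₀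
    | succ n ih => exact ih.union (nbhd_finite hG ih)
  · rw [componentOf_empty, Set.mem_ofPred_eq, reachable_iff_reflTransGen] at hu
    induction hu with
    | refl => exact ⟨0, rfl⟩
    | tail _ hadj ih =>
      obtain ⟨n, hn⟩ := ih
      exact ⟨n + 1, by_cases (fun h => Or.inl h) fun h => Or.inr ⟨h, _, hn, hadj⟩⟩

theorem exists_separator_seq (hG : LocFin G) {𝓛 : ℕ → Set (Set V)} (h𝓛 : Monotone 𝓛)
    (hfin : ∀ n, (𝓛 n).Finite) (hbdry : ∀ n, ∀ R ∈ 𝓛 n, (vBdry G R).Finite) (v₀ : V) :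
    ∃ S : ℕ → Set V, Monotone S ∧ (∀ n, (S n).Finite) ∧ (∀ n, v₀ ∈ S n) ∧
      (∀ u ∈ G.componentOf ∅ v₀, ∃ n, u ∈ S n) ∧ ∀ n, ∀ R ∈ 𝓛 n, vBdry G R ⊆ S n := by
  obtain ⟨B, hB, hBfin, hv₀, hexh⟩ := exists_finite_exhaustion hG v₀
  refine ⟨fun n => B n ∪ ⋃ R ∈ 𝓛 n, vBdry G R,
    fun m n h => Set.union_subset_union (hB h) (Set.biUnion_subset_biUnion_left (h𝓛 h)),
    fun n => (hBfin n).union ((hfin n).biUnion (hbdry n)),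
    fun n => Or.inl (hB (Nat.zero_le n) hv₀), fun u hu => ?_,
    fun n R hR => Set.subset_union_of_subset_right (Set.subset_biUnion_of_mem hR) _⟩
  obtain ⟨n, hn⟩ := hexh u hu
  exact ⟨n, Or.inl hn⟩

def IsGoodComp (G : SimpleGraph V) (v₀ : V) (S : Set V) (𝓛 : Set (Set V)) (D : Set V) : Prop :=
  ∃ u ∈ G.componentOf ∅ v₀ \ S, D = G.componentOf S u ∧ D.Infinite ∧ ∀ R ∈ 𝓛, Disjoint D R

variable {S S' : Set V} {𝓛 𝓛' : Set (Set V)} {D : Set V}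

theorem IsGoodComp.isCompOf (hD : IsGoodComp G v₀ S 𝓛 D) : IsCompOf G S D := by
  obtain ⟨u, hu, rfl, -⟩ := hD
  exact isCompOf_componentOf hu.2

theorem IsGoodComp.subset (hD : IsGoodComp G v₀ S 𝓛 D) : D ⊆ G.componentOf ∅ v₀ := by
  obtain ⟨u, hu, rfl, -⟩ := hD
  rw [← componentOf_eq_of_mem hu.1]
  exact componentOf_anti (Set.empty_subset S) u

theorem finite_image_componentOf (hG : LocFin G) (hS : S.Finite) (hv₀ : v₀ ∈ S) :
    ((G.componentOf ∅ v₀ \ S).image (G.componentOf S)).Finite := by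
  refine ((nbhd_finite hG hS).image (G.componentOf S)).subset ?_
  rintro _ ⟨u, ⟨hu, huS⟩, rfl⟩
  rw [componentOf_empty] at hu
  obtain ⟨x, hx, s, hs, hxs⟩ := exists_adj_of_reachable_mem huS hv₀ hu.symm
  exact ⟨x, ⟨notMem_of_mem_componentOf huS hx, s, hs, hxs.symm⟩, componentOf_eq_of_mem hx⟩

theorem finite_diff_sUnion_of_forall_not_isGoodComp (hG : LocFin G) (hS : S.Finite)
    (hv₀ : v₀ ∈ S) (hbd : ∀ R ∈ 𝓛, vBdry G R ⊆ S) (h : ∀ D, ¬IsGoodComp G v₀ S 𝓛 D) :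
    (G.componentOf ∅ v₀ \ ⋃₀ 𝓛).Finite := by
  refine (hS.union (((finite_image_componentOf hG hS hv₀).sep Set.Finite).sUnion
    fun D hD => hD.2)).subset ?_
  rintro y ⟨hy, hy𝓛⟩
  by_cases hyS : y ∈ S
  · exact Or.inl hyS
  refine Or.inr ⟨G.componentOf S y, ⟨⟨y, ⟨hy, hyS⟩, rfl⟩, ?_⟩, mem_componentOf_self⟩
  by_contra hinf
  refine h _ ⟨y, ⟨hy, hyS⟩, rfl, hinf, fun R hR => ?_⟩
  by_contra hmeet
  exact hy𝓛 ⟨R, hR, componentOf_subset_of_vBdry_subset hyS (hbd R hR)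
    (Set.not_disjoint_iff_nonempty_inter.1 hmeet) mem_componentOf_self⟩

theorem IsGoodComp.componentOf_of_mem (hSS' : S ⊆ S') (h𝓛 : 𝓛 ⊆ 𝓛')
    (hbd : ∀ R ∈ 𝓛, vBdry G R ⊆ S) (hD : IsGoodComp G v₀ S' 𝓛' D) {x : V} (hx : x ∈ D) :
    IsGoodComp G v₀ S 𝓛 (G.componentOf S x) ∧ D ⊆ G.componentOf S x := by
  have hxK := hD.subset hx
  obtain ⟨u, hu, rfl, hinf, hdisj⟩ := hD
  have hxS : x ∉ S := fun h => notMem_of_mem_componentOf hu.2 hx (hSS' h)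
  have hsub : G.componentOf S' u ⊆ G.componentOf S x := by
    rw [← componentOf_eq_of_mem hx]
    exact componentOf_anti hSS' x
  refine ⟨⟨x, ⟨hxK, hxS⟩, rfl, hinf.mono hsub, fun R hR => ?_⟩, hsub⟩
  by_contra hmeet
  have hxR := componentOf_subset_of_vBdry_subset hxS (hbd R hR)
    (Set.not_disjoint_iff_nonempty_inter.1 hmeet) mem_componentOf_self
  exact Set.disjoint_left.1 (hdisj R (h𝓛 hR)) hx hxR

end GoodComponents

section Capture

def CapturesAllEnds (G : SimpleGraph V) (𝓛 : ℕ → Set (Set V)) : Prop :=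
  ∀ f, IsRay G f → ∃ n, ∃ R ∈ 𝓛 n, ∃ g, IsRay G g ∧ RayEquiv G f g ∧ Set.range g ⊆ R

variable {G : SimpleGraph V} {v₀ : V} {S : ℕ → Set V} {𝓛 : ℕ → Set (Set V)}

theorem exists_antitone_isGoodComp (hG : LocFin G) (hS : Monotone S)
    (hSfin : ∀ n, (S n).Finite) (hv₀ : ∀ n, v₀ ∈ S n) (h𝓛 : Monotone 𝓛)
    (hbd : ∀ n, ∀ R ∈ 𝓛 n, vBdry G R ⊆ S n) (hgood : ∀ n, ∃ D, IsGoodComp G v₀ (S n) (𝓛 n) D) :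
    ∃ D : ℕ → Set V, (∀ n, IsGoodComp G v₀ (S n) (𝓛 n) (D n)) ∧ Antitone D := by
  let α n := {D // IsGoodComp G v₀ (S n) (𝓛 n) D}
  have hfin : ∀ n, {D | IsGoodComp G v₀ (S n) (𝓛 n) D}.Finite := fun n =>
    (finite_image_componentOf hG (hSfin n) (hv₀ n)).subset fun _ ⟨u, hu, hD, _⟩ => ⟨u, hu, hD.symm⟩
  have : ∀ n, Finite (α n) := fun n => (hfin n).to_subtype
  have : ∀ n, Nonempty (α n) := fun n => let ⟨D, hD⟩ := hgood n; ⟨⟨D, hD⟩⟩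
  have hpt : ∀ {n} (D : α n), D.1.Nonempty := fun D => let ⟨_, _, _, hinf, _⟩ := D.2; hinf.nonempty
  let π : {i j : ℕ} → i ≤ j → α j → α i := fun {i j} hij D =>
    ⟨_, ((D.2.componentOf_of_mem (hS hij) (h𝓛 hij) (hbd i)) (hpt D).some_mem).1⟩
  have hπ : ∀ {i j} (hij : i ≤ j) (D : α j), D.1 ⊆ (π hij D).1 := fun hij D =>
    ((D.2.componentOf_of_mem (hS hij) (h𝓛 hij) (hbd _)) (hpt D).some_mem).2
  obtain ⟨D, hD⟩ := exists_seq_forall_proj_of_forall_finite π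
    (fun i D => Subtype.ext (D.2.isCompOf.eq_componentOf (hpt D).some_mem).symm)
    (fun i j l hij hjl D => Subtype.ext (componentOf_eq_of_mem
      (componentOf_anti (hS hij) _ (hpt (π hjl D)).some_mem)))
    fun i _ => Set.toFinite _
  refine ⟨fun n => (D n).1, fun n => (D n).2, fun i j hij => ?_⟩
  show (D j).1 ⊆ (D i).1
  rw [← hD hij]
  exact hπ hij (D j)

/-- If every stage had a good component, König's lemma would give nested ones and hence a ray
with a tail in each; but some ray of its end lies in a region `R ∈ 𝓛 n`, which the good
component of stage `n` avoids. -/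
theorem exists_forall_not_isGoodComp (hG : LocFin G) (hS : Monotone S)
    (hSfin : ∀ n, (S n).Finite) (hv₀ : ∀ n, v₀ ∈ S n)
    (hexh : ∀ u ∈ G.componentOf ∅ v₀, ∃ n, u ∈ S n) (h𝓛 : Monotone 𝓛) (hbd : ∀ n, ∀ R ∈ 𝓛 n, vBdry G R ⊆ S n)
    (hcapt : CapturesAllEnds G 𝓛) :
    ∃ n, ∀ D, ¬IsGoodComp G v₀ (S n) (𝓛 n) D := by
  by_contra! hgood
  obtain ⟨D, hD, hanti⟩ := exists_antitone_isGoodComp hG hS hSfin hv₀ h𝓛 hbd hgood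
  have hempty : ⋂ n, D n = ∅ := Set.eq_empty_of_forall_notMem fun v hv => by
    obtain ⟨n, hn⟩ := hexh v ((hD 0).subset (Set.mem_iInter.1 hv 0))
    exact Set.eq_empty_iff_forall_notMem.1 (hD n).isCompOf.2.1 v ⟨Set.mem_iInter.1 hv n, hn⟩
  obtain ⟨f, hf, htail⟩ := exists_isRay_forall_hasTailIn hG
    (fun n => (hD n).isCompOf.2.2.1) hanti hempty
  obtain ⟨n, R, hR, g, -, hfg, hgR⟩ := hcapt f hf
  obtain ⟨N, hN⟩ := hfg.hasTailIn (hSfin n) (hD n).isCompOf (htail n)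
  obtain ⟨-, -, -, -, hdisj⟩ := hD n
  exact Set.disjoint_left.1 (hdisj R hR) (hN N le_rfl) (hgR (Set.mem_range_self N))

theorem exists_finite_diff_sUnion (hG : LocFin G) (h𝓛 : Monotone 𝓛)
    (hfin : ∀ n, (𝓛 n).Finite) (hbdry : ∀ n, ∀ R ∈ 𝓛 n, (vBdry G R).Finite)
    (hcapt : CapturesAllEnds G 𝓛) (v₀ : V) :
    ∃ n, (G.componentOf ∅ v₀ \ ⋃₀ 𝓛 n).Finite := by
  obtain ⟨S, hS, hSfin, hv₀, hexh, hbd⟩ := exists_separator_seq hG h𝓛 hfin hbdry v₀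
  obtain ⟨n, hn⟩ := exists_forall_not_isGoodComp hG hS hSfin hv₀ hexh h𝓛 hbd hcapt
  exact ⟨n, finite_diff_sUnion_of_forall_not_isGoodComp hG (hSfin n) (hv₀ n) (hbd n) hn⟩

end Capture

/-- Theorem 2(i): if `G` is locally finite, infinite, has at most countably many ends,
`δ(G) ≥ k`, and every end has a defining sequence `C₀ ⊋ C₁ ⊋ …` of regions with
`δ⁺_G(Cₙ) ≥ k` and `G - Cₙ` connected, then `G` has a finite nonempty subgraph of
minimum degree at least `k`. -/
theorem stmt12 (G : SimpleGraph V) (hG : LocFin G) (hinf : Infinite V) (k : ℕ)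
    (hcount : Countable (Quot fun p q : {f : ℕ → V // IsRay G f} => RayEquiv G p.1 q.1))
    (hdeg : ∀ v, k ≤ (G.neighborSet v).ncard)
    (hends : ∀ f, IsRay G f → ∃ C : ℕ → Set V,
      (∀ n, IsRegion G (C n)) ∧ (∀ n, C (n + 1) ⊂ C n) ∧ (⋂ n, C n) = ∅ ∧
      (∀ n, ∃ g, IsRay G g ∧ RayEquiv G f g ∧ Set.range g ⊆ C n) ∧
      (∀ n, minOutDegGE G (C n) k) ∧
      (∀ n, (G.induce ((C n)ᶜ : Set V)).Connected)) :
    ∃ H : G.Subgraph, H.verts.Finite ∧ H.verts.Nonempty ∧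
      ∀ w ∈ H.verts, k ≤ (H.neighborSet w).ncard := by
  obtain ⟨v₀⟩ := hinf.nonempty
  have hK : ∀ v ∈ G.componentOf ∅ v₀, ∀ w, G.Adj v w → w ∈ G.componentOf ∅ v₀ :=
    fun v hv w hvw => mem_componentOf_of_adj (Set.notMem_empty v₀) hv (Set.notMem_empty w) hvw
  by_cases hKfin : (G.componentOf ∅ v₀).Finite
  · exact exists_finite_subgraph_minDegree hG hdeg hK Set.finite_empty
      Set.pairwiseDisjoint_empty (by simp) (by simp) (by simpa) ⟨v₀, by simp [mem_componentOf_self]⟩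
  obtain ⟨σ, hσ, hσall⟩ := exists_seq_rayEquiv hcount (exists_isRay hG hKfin)
  choose C hreg hssub hempty hray hmin _ using fun n => hends (σ n) (hσ n)
  obtain ⟨𝓛, h𝓛, h𝓛mono, hcov⟩ := exists_isPacking_seq (v₀ := v₀) hreg
    (fun n => antitone_nat_of_succ_le fun m => (hssub n m).subset) hempty hmin
  have hcapt : CapturesAllEnds G 𝓛 := fun f hf => by
    obtain ⟨j, hj⟩ := hσall f hf
    obtain ⟨m, R, hR, hCR⟩ := hcov j
    obtain ⟨g, hg, hjg, hgC⟩ := hray j m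
    exact ⟨j + 1, R, hR, g, hg, hj.symm.trans hjg, hgC.trans hCR⟩
  obtain ⟨n, hn⟩ := exists_finite_diff_sUnion hG h𝓛mono (fun n => (h𝓛 n).finite)
    (fun n R hR => ((h𝓛 n).isRegion R hR).2) hcapt v₀
  exact exists_finite_subgraph_minDegree hG hdeg hK (h𝓛 n).finite (h𝓛 n).pairwiseDisjoint
    (fun R hR => ((h𝓛 n).isRegion R hR).2) (h𝓛 n).minOutDeg hn
    ⟨v₀, mem_componentOf_self, fun ⟨R, hR, hv₀R⟩ => (h𝓛 n).notMem R hR hv₀R⟩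
end

section
/- Let G be a locally finite infinite graph and 𝒞 a nested set of regions of G (any two regions in 𝒞 are disjoint or one contains the other) whose corresponding open sets form, together with open stars and open edge intervals, a basis of the Freudenthal compactification |G|. If δ(G) ≥ k and δ⁺_G(C) ≥ k for every C ∈ 𝒞, then G has a finite nonempty subgraph of minimum degree at least k. -/
open SimpleGraph Set

universe u
variable {V : Type u}

/-!
Fix a vertex `a`. If for some `n` every vertex at distance `n + 1` from `a` lies in a member of
`𝒞` that avoids `a` and whose neighbourhood is closer to `a`, then, following geodesics from `a`,
finitely many such members cover the component of `a` outside the ball of radius `n`. Deleting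
from that component the interiors of these members leaves a finite set in which every vertex
keeps `k` neighbours: uncovered vertices by `δ(G) ≥ k`, boundary vertices of the maximal members
by `δ⁺ ≥ k`, nestedness making the maximal members disjoint.

Otherwise König's lemma gives a geodesic ray from `a` lying on geodesics to arbitrarily distant
uncovered vertices. The basis property puts a tail of the ray into some `C ∈ 𝒞` avoiding `a`;
beyond the finite set `N(C)`, geodesics from that tail cannot leave `C`, so those distant
vertices are covered after all.
-/

namespace SimpleGraph

variable {G : SimpleGraph V}

def OnGeodesic (G : SimpleGraph V) (a x b : V) : Prop :=
  G.Reachable x b ∧ G.dist a b = G.dist a x + G.dist x b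

lemma Reachable.onGeodesic_left {a b : V} (h : G.Reachable a b) : G.OnGeodesic a a b :=
  ⟨h, by simp⟩

lemma OnGeodesic.exists_adj_dist_succ {a x b : V} (h : G.OnGeodesic a x b)
    (hlt : G.dist a x < G.dist a b) :
    ∃ s, G.Adj x s ∧ G.dist a s = G.dist a x + 1 ∧ G.OnGeodesic a s b := by
  obtain ⟨hxb, heq⟩ := h
  obtain ⟨p, hp⟩ := hxb.exists_walk_length_eq_dist
  cases p with
  | nil => exact (lt_irrefl _ hlt).elim
  | @cons _ s _ hxs q =>
    have hsb : G.Reachable s b := ⟨q⟩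
    have hq : G.dist s b ≤ q.length := dist_le q
    have hxb' := hsb.dist_triangle_right x
    have has := hxs.reachable.dist_triangle_right a
    have hab := hsb.dist_triangle_right a
    rw [dist_eq_one_iff_adj.mpr hxs] at hxb' has
    simp only [Walk.length_cons] at hp
    exact ⟨s, hxs, by omega, hsb, by omega⟩

lemma Reachable.exists_onGeodesic_of_le_dist {a b : V} (h : G.Reachable a b) {j : ℕ}
    (hj : j ≤ G.dist a b) : ∃ x, G.dist a x = j ∧ G.OnGeodesic a x b := by
  induction j with
  | zero => exact ⟨a, dist_self, h.onGeodesic_left⟩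
  | succ j ih =>
    obtain ⟨x, rfl, hx⟩ := ih (by omega)
    obtain ⟨s, -, hs, hsb⟩ := hx.exists_adj_dist_succ (by omega)
    exact ⟨s, hs, hsb⟩

/-- Each step along the geodesic moves away from `a`, so it never reaches `N(C)`. -/
lemma OnGeodesic.mem_of_mem {C : Set V} {a x b : V} (h : G.OnGeodesic a x b) (hx : x ∈ C)
    (hC : ∀ y ∈ nbhd G C, G.dist a y < G.dist a x) : b ∈ C := by
  obtain ⟨d, hd⟩ : ∃ d, G.dist x b = d := ⟨_, rfl⟩
  induction d generalizing x with
  | zero => rwa [← h.1.dist_eq_zero_iff.mp hd]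
  | succ d ih =>
    obtain ⟨s, hxs, hs, hsb⟩ := h.exists_adj_dist_succ (by have := h.2; omega)
    have hsC : s ∈ C := by
      by_contra hsC
      have := hC s ⟨hsC, x, hx, hxs⟩
      omega
    refine ih hsb hsC (fun y hy => (hC y hy).trans (by omega)) ?_
    have := h.2
    have := hsb.2
    omega

lemma LocFin.finite_setOf_dist_le (hG : LocFin G) (a : V) (n : ℕ) :
    {u | G.Reachable a u ∧ G.dist a u ≤ n}.Finite := by
  induction n with
  | zero =>
    refine (Set.finite_singleton a).subset fun u ⟨hu, hd⟩ => ?_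
    exact (hu.dist_eq_zero_iff.mp (Nat.le_zero.mp hd)).symm
  | succ n ih =>
    refine (ih.union (ih.biUnion fun x _ => hG x)).subset fun u ⟨hu, hd⟩ => ?_
    by_cases hn : G.dist a u ≤ n
    · exact Or.inl ⟨hu, hn⟩
    obtain ⟨x, hx, hxu⟩ := hu.exists_onGeodesic_of_le_dist (j := n) (by omega)
    have hxu1 : G.dist x u = 1 := by have := hxu.2; omega
    exact Or.inr (Set.mem_biUnion ⟨hu.trans hxu.1.symm, hx.le⟩ (dist_eq_one_iff_adj.mp hxu1))

def OnFarGeodesics (G : SimpleGraph V) (a : V) (W : Set V) (x : V) : Prop :=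
  ∀ n, ∃ w ∈ W, n < G.dist a w ∧ G.OnGeodesic a x w

lemma onFarGeodesics_self {a : V} {W : Set V} (hW : ∀ n, ∃ w ∈ W, n < G.dist a w) :
    G.OnFarGeodesics a W a := fun n =>
  let ⟨w, hw, hnw⟩ := hW n
  ⟨w, hw, hnw, (Reachable.of_dist_ne_zero (by omega)).onGeodesic_left⟩

/-- König's lemma: finitely many neighbours, so one of them lies on infinitely many of the
geodesics. -/
lemma OnFarGeodesics.exists_adj (hG : LocFin G) {a x : V} {W : Set V}
    (hx : G.OnFarGeodesics a W x) :
    ∃ s, G.Adj x s ∧ G.dist a s = G.dist a x + 1 ∧ G.OnFarGeodesics a W s := by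
  have hstep : ∀ n, ∃ s : G.neighborSet x, ∃ w ∈ W, n < G.dist a w ∧
      G.dist a s = G.dist a x + 1 ∧ G.OnGeodesic a s w := by
    intro n
    obtain ⟨w, hw, hnw, hxw⟩ := hx (max n (G.dist a x))
    obtain ⟨s, hxs, hs, hsw⟩ := hxw.exists_adj_dist_succ (by omega)
    exact ⟨⟨s, hxs⟩, w, hw, by omega, hs, hsw⟩
  choose s w hw hnw hs hsw using hstep
  have := (hG x).to_subtype
  obtain ⟨s₀, hs₀⟩ := Finite.exists_infinite_fiber s
  have hfib := Set.infinite_coe_iff.mp hs₀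
  obtain ⟨m, hm⟩ := hfib.nonempty
  refine ⟨s₀, s₀.2, hm ▸ hs m, fun n => ?_⟩
  obtain ⟨m, hm, hnm⟩ := hfib.exists_gt n
  exact ⟨w m, hw m, by have := hnw m; omega, hm ▸ hsw m⟩

lemma LocFin.exists_ray_onFarGeodesics (hG : LocFin G) {a : V} {W : Set V}
    (h : G.OnFarGeodesics a W a) :
    ∃ r : ℕ → V, IsRay G r ∧ ∀ i, G.dist a (r i) = i ∧ G.OnFarGeodesics a W (r i) := by
  choose! next hadj hdist hnext using fun x (hx : G.OnFarGeodesics a W x) => hx.exists_adj hG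
  have key : ∀ i, G.dist a (next^[i] a) = i ∧ G.OnFarGeodesics a W (next^[i] a) := by
    intro i
    induction i with
    | zero => exact ⟨dist_self, h⟩
    | succ i ih =>
      rw [Function.iterate_succ_apply']
      exact ⟨by rw [hdist _ ih.2, ih.1], hnext _ ih.2⟩
  refine ⟨fun i => next^[i] a, ⟨fun i j hij => ?_, fun i => ?_⟩, key⟩
  · simpa only [(key i).1, (key j).1] using congrArg (G.dist a) hij
  · simpa only [Function.iterate_succ_apply'] using hadj _ (key i).2

lemma LocFin.finite_nbhd (hG : LocFin G) {C : Set V} (hC : (vBdry G C).Finite) :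
    (nbhd G C).Finite :=
  (hC.biUnion fun v _ => hG v).subset fun w ⟨hwC, _, hvC, hvw⟩ =>
    Set.mem_biUnion ⟨hvC, w, hwC, hvw⟩ hvw

def CoveredFrom (G : SimpleGraph V) (𝒞 : Set (Set V)) (a x : V) : Prop :=
  ∃ C ∈ 𝒞, a ∉ C ∧ x ∈ C ∧ ∀ y ∈ nbhd G C, G.dist a y < G.dist a x

/-- If spheres of arbitrarily large radius contained uncovered vertices, a geodesic ray towards
them would have a tail in some `C ∈ 𝒞`, and then so would the uncovered vertices beyond it. -/
lemma LocFin.exists_sphere_coveredFrom (hG : LocFin G) {𝒞 : Set (Set V)}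
    (hbdry : ∀ C ∈ 𝒞, (vBdry G C).Finite)
    (hbasis : ∀ f, IsRay G f → ∀ S : Set V, S.Finite → ∃ C ∈ 𝒞, C ∩ S = ∅ ∧ HasTailIn f C)
    (a : V) : ∃ n, ∀ x, G.dist a x = n + 1 → G.CoveredFrom 𝒞 a x := by
  by_contra! hbad
  have hfar : G.OnFarGeodesics a {x | ¬ G.CoveredFrom 𝒞 a x} a :=
    onFarGeodesics_self fun n => let ⟨x, hx, hxW⟩ := hbad n; ⟨x, hxW, by omega⟩
  obtain ⟨r, hray, hr⟩ := hG.exists_ray_onFarGeodesics hfar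
  obtain ⟨C, hC, hCa, N, hN⟩ := hbasis r hray {a} (Set.finite_singleton a)
  obtain ⟨m, hm⟩ := ((hG.finite_nbhd (hbdry C hC)).image (G.dist a)).bddAbove
  set i := max N (m + 1)
  have hnbC : ∀ y ∈ nbhd G C, G.dist a y < G.dist a (r i) := fun y hy => by
    have := hm (Set.mem_image_of_mem _ hy)
    have := (hr i).1
    omega
  obtain ⟨w, hw, -, hiw⟩ := (hr i).2 0
  refine hw ⟨C, hC, fun haC => hCa.subset ⟨haC, rfl⟩, hiw.mem_of_mem (hN i (le_max_left ..)) hnbC,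
    fun y hy => (hnbC y hy).trans_le ?_⟩
  have := hiw.2
  omega

lemma LocFin.exists_finite_cover_of_sphere_coveredFrom (hG : LocFin G) {𝒞 : Set (Set V)}
    {a : V} {n : ℕ} (hn : ∀ x, G.dist a x = n + 1 → G.CoveredFrom 𝒞 a x) :
    ∃ 𝒟 ⊆ 𝒞, 𝒟.Finite ∧ (∀ D ∈ 𝒟, a ∉ D) ∧
      {u | G.Reachable a u} \ ⋃₀ 𝒟 ⊆ {u | G.Reachable a u ∧ G.dist a u ≤ n} := by
  choose! D hD𝒞 haD hxD hnbD using hn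
  have hsphere : {x | G.dist a x = n + 1}.Finite :=
    (hG.finite_setOf_dist_le a (n + 1)).subset fun x hx =>
      ⟨Reachable.of_dist_ne_zero (by rw [hx]; omega), hx.le⟩
  refine ⟨D '' {x | G.dist a x = n + 1}, Set.image_subset_iff.mpr hD𝒞, hsphere.image D,
    Set.forall_mem_image.mpr haD, fun u ⟨hu, hu𝒟⟩ => ⟨hu, ?_⟩⟩
  by_contra! hnu
  obtain ⟨x, hx, hxu⟩ := hu.exists_onGeodesic_of_le_dist (j := n + 1) hnu
  exact hu𝒟 ⟨D x, Set.mem_image_of_mem D hx,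
    hxu.mem_of_mem (hxD x hx) (hnbD x hx)⟩

def vInterior (G : SimpleGraph V) (D : Set V) : Set V :=
  {v | v ∈ D ∧ G.neighborSet v ⊆ D}

lemma mem_vBdry_of_notMem_vInterior {D : Set V} {v : V} (hv : v ∈ D)
    (hint : v ∉ vInterior G D) : v ∈ vBdry G D := by
  obtain ⟨w, hvw, hwD⟩ := Set.not_subset.mp fun h => hint ⟨hv, h⟩
  exact ⟨hv, w, hwD, hvw⟩

lemma notMem_vInterior_of_mem_vBdry {D : Set V} {v : V} (hv : v ∈ vBdry G D) :
    v ∉ vInterior G D :=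
  fun ⟨_, hsub⟩ => let ⟨_, _, hwD, hvw⟩ := hv; hwD (hsub hvw)

lemma Adj.mem_of_mem_vInterior {D : Set V} {v w : V} (hvw : G.Adj v w)
    (hw : w ∈ vInterior G D) : v ∈ D :=
  hw.2 hvw.symm

section NestedCover

variable {K : Set V} {𝒟 : Set (Set V)}

lemma neighborSet_subset_diff_vInterior (hK : ∀ v ∈ K, ∀ w, G.Adj v w → w ∈ K) {v : V}
    (hv : v ∈ K \ ⋃₀ 𝒟) : G.neighborSet v ⊆ K \ ⋃ D ∈ 𝒟, vInterior G D :=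
  fun w hvw => ⟨hK v hv.1 w hvw, fun hw =>
    let ⟨D, hD, hwD⟩ := Set.mem_iUnion₂.mp hw
    hv.2 ⟨D, hD, Adj.mem_of_mem_vInterior hvw hwD⟩⟩

/-- A member whose interior contains a neighbour of `v` also contains `v`, so nestedness and the
maximality of `D₀` put it inside `D₀`. -/
lemma inter_neighborSet_subset_diff_vInterior (hK : ∀ v ∈ K, ∀ w, G.Adj v w → w ∈ K)
    (hnested : ∀ C ∈ 𝒟, ∀ D ∈ 𝒟, C ⊆ D ∨ D ⊆ C ∨ C ∩ D = ∅) {v : V} (hv : v ∈ K)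
    {D₀ : Set V} (hD₀ : Maximal (· ∈ {D | D ∈ 𝒟 ∧ v ∈ D}) D₀) :
    (nbhd G D₀ ∪ vBdry G D₀) ∩ G.neighborSet v ⊆ K \ ⋃ D ∈ 𝒟, vInterior G D := by
  rintro w ⟨hw, hvw⟩
  refine ⟨hK v hv w hvw, fun hwi => ?_⟩
  obtain ⟨D, hD, hwD⟩ := Set.mem_iUnion₂.mp hwi
  have hvD := Adj.mem_of_mem_vInterior hvw hwD
  have hDD₀ : D ⊆ D₀ := by
    rcases hnested D₀ hD₀.1.1 D hD with h | h | h
    · exact hD₀.2 ⟨hD, hvD⟩ h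
    · exact h
    · exact absurd (h ▸ ⟨hD₀.1.2, hvD⟩ : v ∈ (∅ : Set V)) id
  have hwD₀ : w ∈ vInterior G D₀ := ⟨hDD₀ hwD.1, hwD.2.trans hDD₀⟩
  rcases hw with ⟨hwD₀', -⟩ | hwb
  · exact hwD₀' hwD₀.1
  · exact notMem_vInterior_of_mem_vBdry hwb hwD₀

lemma exists_finite_le_ncard_inter_neighborSet {k : ℕ}
    (hK : ∀ v ∈ K, ∀ w, G.Adj v w → w ∈ K) (h𝒟 : 𝒟.Finite)
    (hnested : ∀ C ∈ 𝒟, ∀ D ∈ 𝒟, C ⊆ D ∨ D ⊆ C ∨ C ∩ D = ∅)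
    (hbdry : ∀ D ∈ 𝒟, (vBdry G D).Finite) (hrest : (K \ ⋃₀ 𝒟).Finite)
    (hne : (K \ ⋃₀ 𝒟).Nonempty) (hdeg : ∀ v, k ≤ (G.neighborSet v).ncard)
    (hout : ∀ D ∈ 𝒟, minOutDegGE G D k) :
    ∃ A : Set V, A.Finite ∧ A.Nonempty ∧ ∀ v ∈ A, k ≤ (A ∩ G.neighborSet v).ncard := by
  set A := K \ ⋃ D ∈ 𝒟, vInterior G D
  have hnotint : ∀ v ∈ A, ∀ D ∈ 𝒟, v ∈ D → v ∈ vBdry G D := fun v hv D hD hvD =>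
    mem_vBdry_of_notMem_vInterior hvD fun h => hv.2 (Set.mem_biUnion hD h)
  have hA : A.Finite := by
    refine (hrest.union (h𝒟.biUnion hbdry)).subset fun v hv => ?_
    by_cases hv𝒟 : v ∈ ⋃₀ 𝒟
    · obtain ⟨D, hD, hvD⟩ := hv𝒟
      exact Or.inr (Set.mem_biUnion hD (hnotint v hv D hD hvD))
    · exact Or.inl ⟨hv.1, hv𝒟⟩
  obtain ⟨a, ha⟩ := hne
  refine ⟨A, hA, ⟨a, ha.1, fun h => ?_⟩, fun v hv => ?_⟩
  · obtain ⟨D, hD, haD⟩ := Set.mem_iUnion₂.mp h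
    exact ha.2 ⟨D, hD, haD.1⟩
  by_cases hv𝒟 : v ∈ ⋃₀ 𝒟
  · obtain ⟨D₀, hD₀⟩ := (h𝒟.subset fun D (hD : D ∈ 𝒟 ∧ v ∈ D) => hD.1).exists_maximal
      (let ⟨D, hD, hvD⟩ := hv𝒟; ⟨D, hD, hvD⟩)
    calc k ≤ degIn G (nbhd G D₀ ∪ vBdry G D₀) v :=
          hout D₀ hD₀.1.1 v (hnotint v hv D₀ hD₀.1.1 hD₀.1.2)
      _ ≤ (A ∩ G.neighborSet v).ncard :=
          Set.ncard_le_ncard (Set.subset_inter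
            (inter_neighborSet_subset_diff_vInterior hK hnested hv.1 hD₀) Set.inter_subset_right)
            (hA.inter_of_left _)
  · rw [Set.inter_eq_right.mpr (neighborSet_subset_diff_vInterior hK ⟨hv.1, hv𝒟⟩)]
    exact hdeg v

end NestedCover

lemma exists_subgraph_of_le_ncard_inter_neighborSet {k : ℕ} {A : Set V}
    (hA : A.Finite) (hne : A.Nonempty) (hdeg : ∀ v ∈ A, k ≤ (A ∩ G.neighborSet v).ncard) :
    ∃ H : G.Subgraph, H.verts.Finite ∧ H.verts.Nonempty ∧
      ∀ w ∈ H.verts, k ≤ (H.neighborSet w).ncard := by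
  refine ⟨(⊤ : G.Subgraph).induce A, hA, hne, fun w (hw : w ∈ A) => ?_⟩
  convert hdeg w hw using 2
  ext v
  simp [hw]

end SimpleGraph

/-- Theorem 4(i): if `𝒞` is a nested set of regions of `G` defining a basis of `|G|`
(in particular, for every end and every finite vertex set `S` some `C ∈ 𝒞` avoiding `S`
contains a tail of every ray of that end), `δ(G) ≥ k`, and `δ⁺_G(C) ≥ k` for every
`C ∈ 𝒞`, then `G` has a finite nonempty subgraph of minimum degree at least `k`. -/
theorem stmt13 (G : SimpleGraph V) (hG : LocFin G) (hinf : Infinite V) (k : ℕ)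
    (𝒞 : Set (Set V))
    (hreg : ∀ C ∈ 𝒞, IsRegion G C)
    (hnested : ∀ C ∈ 𝒞, ∀ D ∈ 𝒞, C ⊆ D ∨ D ⊆ C ∨ C ∩ D = ∅)
    (hbasis : ∀ f, IsRay G f → ∀ S : Set V, S.Finite →
      ∃ C ∈ 𝒞, C ∩ S = ∅ ∧ HasTailIn f C)
    (hdeg : ∀ v, k ≤ (G.neighborSet v).ncard)
    (hout : ∀ C ∈ 𝒞, minOutDegGE G C k) :
    ∃ H : G.Subgraph, H.verts.Finite ∧ H.verts.Nonempty ∧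
      ∀ w ∈ H.verts, k ≤ (H.neighborSet w).ncard := by
  obtain ⟨a⟩ := Infinite.nonempty V
  have hbdry : ∀ C ∈ 𝒞, (vBdry G C).Finite := fun C hC => (hreg C hC).2
  obtain ⟨n, hn⟩ := hG.exists_sphere_coveredFrom hbdry hbasis a
  obtain ⟨𝒟, h𝒟𝒞, h𝒟, ha𝒟, hrest⟩ := hG.exists_finite_cover_of_sphere_coveredFrom hn
  obtain ⟨A, hA, hAne, hAdeg⟩ := exists_finite_le_ncard_inter_neighborSet
    (K := {u | G.Reachable a u}) (fun v hv w hvw => hv.trans hvw.reachable) h𝒟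
    (fun C hC D hD => hnested C (h𝒟𝒞 hC) D (h𝒟𝒞 hD)) (fun D hD => hbdry D (h𝒟𝒞 hD))
    ((hG.finite_setOf_dist_le a n).subset hrest)
    ⟨a, Reachable.refl a, fun ⟨D, hD, haD⟩ => ha𝒟 D hD haD⟩ hdeg (fun D hD => hout D (h𝒟𝒞 hD))
  exact exists_subgraph_of_le_ncard_inter_neighborSet hA hAne hAdeg
end

section
/- Let G be a locally finite graph and Ω its set of ends. If every end ω of G has a strictly decreasing defining sequence of regions, and the regions appearing in all these sequences are pairwise nested (any two disjoint or comparable), then for every end ω and every finite vertex set S there is a region C in one of the sequences with ω living in C and C ∩ S = ∅; i.e., the nested family of all these regions defines a neighbourhood basis of every end in |G|. -/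
open SimpleGraph Set

universe u
variable {V : Type u}

/-- If `D` is "closed" relative to `S'` (neighbours of `D` are in `D` or `S'`), then any
connected set `C` avoiding `S'` and meeting `D` is contained in `D`. -/
lemma conn_subset_of_closed (G : SimpleGraph V) {S' D C : Set V}
    (hD : ∀ v ∈ D, ∀ w, G.Adj v w → w ∈ D ∨ w ∈ S')
    (hCconn : (G.induce C).Connected) (hCS : C ∩ S' = ∅)
    (hCD : (C ∩ D).Nonempty) : C ⊆ D := by
  obtain ⟨v0, hv0C, hv0D⟩ := hCD
  have key : ∀ (a b : C) (p : (G.induce C).Walk a b), (a : V) ∈ D → (b : V) ∈ D := by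
    intro a b p
    induction p with
    | nil => exact id
    | @cons u c w hadj q ih =>
      intro ha
      apply ih
      rcases hD _ ha _ hadj with hmem | hmem
      · exact hmem
      · exact absurd (Set.mem_inter c.2 hmem) (by rw [hCS]; exact Set.notMem_empty _)
  intro w hw
  obtain ⟨p⟩ := hCconn ⟨v0, hv0C⟩ ⟨w, hw⟩
  exact key _ _ p hv0D

/-- If every end of `G` has a strictly decreasing defining sequence of regions and the
regions in all these sequences are pairwise nested, then for every end and every finite
vertex set `S` some region in one of the sequences avoids `S` and the end lives in it
(every ray of the end has a tail in it); i.e. the nested family defines a neighbourhood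
basis of every end in `|G|`. -/
theorem stmt19 (G : SimpleGraph V) (hG : LocFin G)
    (D : (f : ℕ → V) → IsRay G f → ℕ → Set V)
    (hreg : ∀ f hf n, IsRegion G (D f hf n))
    (hdec : ∀ f hf n, D f hf (n + 1) ⊂ D f hf n)
    (hempty : ∀ f hf, (⋂ n, D f hf n) = ∅)
    (hray : ∀ f hf n, ∃ g, IsRay G g ∧ RayEquiv G f g ∧ Set.range g ⊆ D f hf n)
    (hnested : ∀ f hf n g hg m,
      D f hf n ⊆ D g hg m ∨ D g hg m ⊆ D f hf n ∨ D f hf n ∩ D g hg m = ∅) :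
    ∀ f (hf : IsRay G f) (S : Set V), S.Finite →
      ∃ g hg n, D g hg n ∩ S = ∅ ∧
        ∀ h, IsRay G h → RayEquiv G f h → HasTailIn h (D g hg n) := by
  intro f hf S hS
  have hanti : Antitone (D f hf) :=
    antitone_nat_of_succ_le (fun n => (hdec f hf n).subset)
  have hex : ∀ s : V, ∃ n, s ∉ D f hf n := by
    intro s
    by_contra hcon
    push_neg at hcon
    have : s ∈ ⋂ n, D f hf n := Set.mem_iInter.mpr hcon
    rw [hempty f hf] at this
    exact this
  choose nn hnn using hex
  obtain ⟨N, hN⟩ : ∃ N, ∀ s ∈ S, nn s ≤ N := by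
    obtain ⟨N, hN⟩ := (hS.image nn).bddAbove
    exact ⟨N, fun s hs => hN (Set.mem_image_of_mem _ hs)⟩
  refine ⟨f, hf, N, ?_, ?_⟩
  · apply Set.eq_empty_iff_forall_notMem.mpr
    rintro s ⟨hsD, hsS⟩
    exact hnn s (hanti (hN s hsS) hsD)
  · intro h hh hfh
    set Dn := D f hf N with hDnd
    set S' := nbhd G Dn with hS'd
    have hS'fin : S'.Finite := by
      have hsub : S' ⊆ ⋃ v ∈ vBdry G Dn, G.neighborSet v := by
        rintro w ⟨hwD, v, hvD, hadj⟩
        exact Set.mem_biUnion ⟨hvD, w, hwD, hadj⟩ hadj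
      exact Set.Finite.subset ((hreg f hf N).2.biUnion (fun v _ => hG v)) hsub
    have hDcl : ∀ v ∈ Dn, ∀ w, G.Adj v w → w ∈ Dn ∨ w ∈ S' := by
      intro v hv w hadj
      by_cases hw : w ∈ Dn
      · exact Or.inl hw
      · exact Or.inr ⟨hw, v, hv, hadj⟩
    obtain ⟨g, hg, hfg, hgD⟩ := hray f hf N
    obtain ⟨C1, hC1comp, hfC1, hgC1⟩ := hfg S' hS'fin
    obtain ⟨C2, hC2comp, hfC2, hhC2⟩ := hfh S' hS'fin
    have hC1D : C1 ⊆ Dn := by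
      obtain ⟨M, hM⟩ := hgC1
      exact conn_subset_of_closed G hDcl hC1comp.2.2.1 hC1comp.2.1
        ⟨g M, hM M le_rfl, hgD (Set.mem_range_self M)⟩
    have hC2D : C2 ⊆ Dn := by
      obtain ⟨M1, hM1⟩ := hfC1
      obtain ⟨M2, hM2⟩ := hfC2
      exact conn_subset_of_closed G hDcl hC2comp.2.2.1 hC2comp.2.1
        ⟨f (max M1 M2), hM2 _ (le_max_right _ _), hC1D (hM1 _ (le_max_left _ _))⟩
    obtain ⟨M, hM⟩ := hhC2
    exact ⟨M, fun n hn => hC2D (hM n hn)⟩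
end
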